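/- For $\Re(s) > 1$ and coprime integers $h, q$ with $q > 2$, the logarithm of $L(s,\psi_{h/q})$ satisfies $\log L(s, \psi_{h/q}) = \frac{1}{\phi(q)} \sum_{\chi \bmod q,\ \chi \ne \chi_0} \tau(\chi)\,\overline{\chi(h)}\, \log L(s, \overline{\chi}) + \frac{\mu(q)}{\phi(q)} \log \zeta(s) - \frac{\mu(q)}{\phi(q)} \sum_{p \mid q}\sum_{k=1}^\infty \frac{1}{k p^{sk}} + \sum_{p \mid q}\sum_{k=1}^\infty \frac{e^{2\pi i h p^k/q}}{k\, p^{sk}} + \sum_{p}\sum_{k=2}^\infty \frac{e^{2\pi i p h k/q} - e^{2\pi i p^k h/q}}{k\, p^{sk}}$, where all logarithms are given by the absolutely convergent prime-power sums $\log L(s,\chi) = \sum_p \sum_{k \ge 1} \chi(p)^k/(k p^{sk})$ and $\log \zeta(s) = \sum_p \sum_{k \ge 1} 1/(k p^{sk})$. -/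

import Mathlib

open Complex Finset Filter Asymptotics intervalIntegral
open scoped Real Topology Classical

noncomputable section

/-- The additive prime divisor function `A(n) = ∑_{p^α ∥ n} α p`. -/
def Apd (n : ℕ) : ℕ := n.factorization.sum fun p a => a * p

/-- The completely multiplicative function `ψ_{h/q}(n) = e^{2πi h A(n)/q}`. -/
def psiA (h : ℤ) (q : ℕ) (n : ℕ) : ℂ :=
  Complex.exp (2 * (Real.pi : ℂ) * Complex.I * (h : ℂ) * (Apd n : ℂ) / (q : ℂ))

/-- The summatory function `∑_{n ≤ x} ψ_{h/q}(n)`. -/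
def Spsi (h : ℤ) (q : ℕ) (x : ℝ) : ℂ := ∑ n ∈ Finset.Icc 1 ⌊x⌋₊, psiA h q n

/-- The Dirichlet series `L(s, ψ_{h/q})`. -/
def Lpsi (h : ℤ) (q : ℕ) (s : ℂ) : ℂ := ∑' n : ℕ, psiA h q n / (n : ℂ) ^ s

/-- the ratio μ(q)/φ(q) -/
def mphi (q : ℕ) : ℝ := (ArithmeticFunction.moebius q : ℝ) / (Nat.totient q : ℝ)

/-- Gauss sum τ(χ) = ∑_{ℓ mod q} χ(ℓ) e^{2πiℓ/q}. -/
def gaussS {q : ℕ} (χ : DirichletCharacter ℂ q) : ℂ :=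
  ∑ l ∈ Finset.range q, χ (l : ZMod q) * Complex.exp (2 * (Real.pi : ℂ) * Complex.I * (l : ℂ) / (q : ℂ))

/-- conjugate Dirichlet character -/
def conjChar {q : ℕ} (χ : DirichletCharacter ℂ q) : DirichletCharacter ℂ q :=
  χ.ringHomComp (starRingEnd ℂ)

/-- `T_{h,q}(s) = ∑_p ∑_{k ≥ 2} (e^{2πiphk/q} - e^{2πip^k h/q})/(k p^{sk})`. -/
def Thq (h : ℤ) (q : ℕ) (s : ℂ) : ℂ :=
  ∑' (p : Nat.Primes) (k : ℕ),
    (Complex.exp (2 * (Real.pi : ℂ) * Complex.I * ((p : ℕ) : ℂ) * (h : ℂ) * ((k : ℂ) + 2) / (q : ℂ))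
      - Complex.exp (2 * (Real.pi : ℂ) * Complex.I * (((p : ℕ) : ℂ) ^ (k + 2)) * (h : ℂ) / (q : ℂ)))
      / (((k : ℂ) + 2) * ((p : ℕ) : ℂ) ^ (s * ((k : ℂ) + 2)))

/-- `U_{h,q}(s)`. -/
def Uhq (h : ℤ) (q : ℕ) (s : ℂ) : ℂ :=
  -((mphi q : ℝ) : ℂ) * ∑ p ∈ q.primeFactors, ∑' k : ℕ,
      1 / (((k : ℂ) + 1) * (p : ℂ) ^ (s * ((k : ℂ) + 1)))
  + ∑ p ∈ q.primeFactors, ∑' k : ℕ,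
      Complex.exp (2 * (Real.pi : ℂ) * Complex.I * (h : ℂ) * ((p : ℂ) ^ (k + 1)) / (q : ℂ))
        / (((k : ℂ) + 1) * (p : ℂ) ^ (s * ((k : ℂ) + 1)))
  + Thq h q s

/-- log of a Dirichlet L-function as absolutely convergent prime-power sum, for Re(s) > 1. -/
def plogChar {q : ℕ} (χ : DirichletCharacter ℂ q) (s : ℂ) : ℂ :=
  ∑' (p : Nat.Primes) (k : ℕ),
    χ (((p : ℕ) : ZMod q)) ^ (k + 1) / (((k : ℂ) + 1) * ((p : ℕ) : ℂ) ^ (s * ((k : ℂ) + 1)))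

/-- log of the Riemann zeta function as prime-power sum, for Re(s) > 1. -/
def plogZeta (s : ℂ) : ℂ :=
  ∑' (p : Nat.Primes) (k : ℕ),
    1 / (((k : ℂ) + 1) * ((p : ℕ) : ℂ) ^ (s * ((k : ℂ) + 1)))

/-- log L(s, ψ_{h/q}) = ∑_p ∑_{k≥1} e^{2πiphk/q}/(k p^{sk}). -/
def plogPsi (h : ℤ) (q : ℕ) (s : ℂ) : ℂ :=
  ∑' (p : Nat.Primes) (k : ℕ),
    Complex.exp (2 * (Real.pi : ℂ) * Complex.I * ((p : ℕ) : ℂ) * (h : ℂ) * ((k : ℂ) + 1) / (q : ℂ))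
      / (((k : ℂ) + 1) * ((p : ℕ) : ℂ) ^ (s * ((k : ℂ) + 1)))

/-- the sum ∑_p ∑_{k≥1} e^{2πi h p^k/q}/(k p^{sk}). -/
def plogPsiAlt (h : ℤ) (q : ℕ) (s : ℂ) : ℂ :=
  ∑' (p : Nat.Primes) (k : ℕ),
    Complex.exp (2 * (Real.pi : ℂ) * Complex.I * (h : ℂ) * (((p : ℕ) : ℂ) ^ (k + 1)) / (q : ℂ))
      / (((k : ℂ) + 1) * ((p : ℕ) : ℂ) ^ (s * ((k : ℂ) + 1)))

end

open scoped ArithmeticFunction.Moebius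

/-!
For `p ∤ q` orthogonality of Dirichlet characters expands the additive character as
`e(h p^k / q) = φ(q)⁻¹ ∑_χ τ(χ) χ̄(h) χ̄(p)^k`, while `χ(p) = 0` for `p ∣ q`; the trivial
character has Gauss sum `τ(χ₀) = μ(q)` (a Ramanujan sum) and contributes `log ζ(s)` with the
Euler factors at `p ∣ q` removed. Replacing `e(phk/q)` by `e(hp^k/q)` costs exactly `T_{h,q}(s)`,
because the two agree for `k = 1`. Every rearrangement is justified by the absolute convergence
of `∑_{p,k} p^{-kσ}` for `σ > 1`.
-/

namespace Nat.Primes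

lemma rpow_neg_le_half {σ : ℝ} (hσ : 1 < σ) (p : Nat.Primes) : ((p : ℕ) : ℝ) ^ (-σ) ≤ 2⁻¹ := by
  have hp : (2 : ℝ) ≤ (p : ℕ) := by exact_mod_cast p.2.two_le
  calc ((p : ℕ) : ℝ) ^ (-σ) ≤ ((p : ℕ) : ℝ) ^ (-1 : ℝ) :=
        Real.rpow_le_rpow_of_exponent_le (by linarith) (by linarith)
    _ = ((p : ℕ) : ℝ)⁻¹ := Real.rpow_neg_one _
    _ ≤ 2⁻¹ := inv_anti₀ two_pos hp

lemma summable_rpow_neg_pow_succ {σ : ℝ} (hσ : 1 < σ) :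
    Summable fun x : Nat.Primes × ℕ => (((x.1 : ℕ) : ℝ) ^ (-σ)) ^ (x.2 + 1) := by
  have hr0 (p : Nat.Primes) : 0 ≤ ((p : ℕ) : ℝ) ^ (-σ) := by positivity
  have hr1 (p : Nat.Primes) : ((p : ℕ) : ℝ) ^ (-σ) < 1 :=
    (rpow_neg_le_half hσ p).trans_lt (by norm_num)
  refine (summable_prod_of_nonneg fun x => by positivity).2 ⟨fun p => ?_, ?_⟩
  · exact (summable_geometric_of_lt_one (hr0 p) (hr1 p)).mul_left _ |>.congr fun k => by ring
  · refine ((Nat.Primes.summable_rpow.2 (neg_lt_neg hσ)).mul_left 2).of_nonneg_of_le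
      (fun p => tsum_nonneg fun k => by positivity) fun p => ?_
    set r := ((p : ℕ) : ℝ) ^ (-σ)
    calc ∑' k : ℕ, r ^ (k + 1) = r * (1 - r)⁻¹ := by
          rw [← tsum_geometric_of_lt_one (hr0 p) (hr1 p), ← tsum_mul_left]
          exact tsum_congr fun k => by ring
      _ ≤ r * 2 := by
          gcongr
          rw [inv_le_comm₀ (by linarith [hr1 p]) two_pos]
          linarith [rpow_neg_le_half hσ p]
      _ = 2 * r := mul_comm _ _

end Nat.Primes

/-- The coefficient `a p k` belongs to `p^{-(k+1)s}`, not to `p^{-ks}`. -/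
noncomputable def primePowerSeries (s : ℂ) (a : ℕ → ℕ → ℂ) : ℂ :=
  ∑' (p : Nat.Primes) (k : ℕ), a p k / (((k : ℂ) + 1) * ((p : ℕ) : ℂ) ^ (s * ((k : ℂ) + 1)))

namespace primePowerSeries

lemma norm_inv_denom_le (s : ℂ) (p : Nat.Primes) (k : ℕ) :
    ‖(((k : ℂ) + 1) * ((p : ℕ) : ℂ) ^ (s * ((k : ℂ) + 1)))⁻¹‖
      ≤ (((p : ℕ) : ℝ) ^ (-s.re)) ^ (k + 1) := by
  have hp : (0 : ℝ) < (p : ℕ) := by exact_mod_cast p.2.pos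
  have hpow : ‖((p : ℕ) : ℂ) ^ (s * ((k : ℂ) + 1))‖ = (((p : ℕ) : ℝ) ^ s.re) ^ (k + 1) := by
    rw [Complex.norm_natCast_cpow_of_pos p.2.pos, ← Real.rpow_mul_natCast hp.le]
    norm_cast
    simp
  have hk : ‖(k : ℂ) + 1‖ = k + 1 := by norm_cast
  rw [norm_inv, norm_mul, hpow, hk, Real.rpow_neg hp.le, inv_pow]
  exact inv_anti₀ (by positivity) (le_mul_of_one_le_left (by positivity) (by linarith))

variable {s : ℂ}

lemma congr {a b : ℕ → ℕ → ℂ} (hab : ∀ (p : Nat.Primes) k, a p k = b p k) :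
    primePowerSeries s a = primePowerSeries s b :=
  tsum_congr fun p => tsum_congr fun k => by rw [hab]

lemma summable_term (hs : 1 < s.re) {a : ℕ → ℕ → ℂ} {C : ℝ} (ha : ∀ p k, ‖a p k‖ ≤ C) :
    Summable fun x : Nat.Primes × ℕ =>
      a x.1 x.2 / (((x.2 : ℂ) + 1) * ((x.1 : ℕ) : ℂ) ^ (s * ((x.2 : ℂ) + 1))) := by
  refine ((Nat.Primes.summable_rpow_neg_pow_succ hs).mul_left C).of_norm_bounded fun x => ?_
  rw [div_eq_mul_inv, norm_mul]
  exact mul_le_mul (ha _ _) (norm_inv_denom_le s x.1 x.2) (norm_nonneg _)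
    ((norm_nonneg _).trans (ha 0 0))

lemma eq_tsum_prod (hs : 1 < s.re) {a : ℕ → ℕ → ℂ} {C : ℝ} (ha : ∀ p k, ‖a p k‖ ≤ C) :
    primePowerSeries s a = ∑' x : Nat.Primes × ℕ,
      a x.1 x.2 / (((x.2 : ℂ) + 1) * ((x.1 : ℕ) : ℂ) ^ (s * ((x.2 : ℂ) + 1))) :=
  ((summable_term hs ha).tsum_prod).symm

lemma add (hs : 1 < s.re) {a b : ℕ → ℕ → ℂ} {A B : ℝ} (ha : ∀ p k, ‖a p k‖ ≤ A)
    (hb : ∀ p k, ‖b p k‖ ≤ B) :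
    primePowerSeries s (a + b) = primePowerSeries s a + primePowerSeries s b := by
  rw [eq_tsum_prod (a := a + b) hs fun p k => norm_add_le_of_le (ha p k) (hb p k),
    eq_tsum_prod hs ha, eq_tsum_prod hs hb, ← (summable_term hs ha).tsum_add (summable_term hs hb)]
  exact tsum_congr fun x => add_div _ _ _

lemma sub (hs : 1 < s.re) {a b : ℕ → ℕ → ℂ} {A B : ℝ} (ha : ∀ p k, ‖a p k‖ ≤ A)
    (hb : ∀ p k, ‖b p k‖ ≤ B) :
    primePowerSeries s (a - b) = primePowerSeries s a - primePowerSeries s b := by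
  rw [eq_tsum_prod (a := a - b) hs fun p k => norm_sub_le_of_le (ha p k) (hb p k),
    eq_tsum_prod hs ha, eq_tsum_prod hs hb, ← (summable_term hs ha).tsum_sub (summable_term hs hb)]
  exact tsum_congr fun x => sub_div _ _ _

lemma finsetSum (hs : 1 < s.re) {ι : Type*} (t : Finset ι) {a : ι → ℕ → ℕ → ℂ} {C : ι → ℝ}
    (ha : ∀ i p k, ‖a i p k‖ ≤ C i) :
    primePowerSeries s (∑ i ∈ t, a i) = ∑ i ∈ t, primePowerSeries s (a i) := by
  have hsum : ∀ p k, ‖(∑ i ∈ t, a i) p k‖ ≤ ∑ i ∈ t, C i := fun p k => by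
    rw [Finset.sum_apply, Finset.sum_apply]
    exact norm_sum_le_of_le t fun i _ => ha i p k
  simp_rw [eq_tsum_prod hs hsum, eq_tsum_prod hs (ha _)]
  rw [← Summable.tsum_finsetSum fun i _ => summable_term hs (ha i)]
  refine tsum_congr fun x => ?_
  simp only [Finset.sum_apply, Finset.sum_div]

lemma const_mul (c : ℂ) (a : ℕ → ℕ → ℂ) :
    primePowerSeries s (fun p k => c * a p k) = c * primePowerSeries s a := by
  simp only [primePowerSeries, mul_div_assoc, tsum_mul_left]

lemma ite_dvd {q : ℕ} (hq : q ≠ 0) (a : ℕ → ℕ → ℂ) :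
    primePowerSeries s (fun p k => if p ∣ q then a p k else 0)
      = ∑ p ∈ q.primeFactors, ∑' k : ℕ,
          a p k / (((k : ℂ) + 1) * (p : ℂ) ^ (s * ((k : ℂ) + 1))) := by
  set F : ℕ → ℂ := fun p => ∑' k : ℕ, a p k / (((k : ℂ) + 1) * (p : ℂ) ^ (s * ((k : ℂ) + 1)))
  have hF (p : Nat.Primes) : ∑' k : ℕ, (if (p : ℕ) ∣ q then a p k else 0)
      / (((k : ℂ) + 1) * ((p : ℕ) : ℂ) ^ (s * ((k : ℂ) + 1))) = if (p : ℕ) ∣ q then F p else 0 := by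
    split_ifs <;> simp [F]
  set t : Finset Nat.Primes := q.primeFactors.preimage (↑) Nat.Primes.coe_nat_injective.injOn
  have hsupp (p : Nat.Primes) (hp : p ∉ t) : (if (p : ℕ) ∣ q then F p else 0) = 0 :=
    if_neg fun hpq => hp (Finset.mem_preimage.2 (Nat.mem_primeFactors.2 ⟨p.2, hpq, hq⟩))
  rw [primePowerSeries, tsum_congr hF, tsum_eq_sum hsupp]
  refine (Finset.sum_preimage _ _ _ (fun p : ℕ => if p ∣ q then F p else 0)
      fun p hp hnot => absurd ⟨⟨p, Nat.prime_of_mem_primeFactors hp⟩, rfl⟩ hnot).trans ?_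
  exact Finset.sum_congr rfl fun p hp => if_pos (Nat.dvd_of_mem_primeFactors hp)

lemma eq_tsum_succ_of_zero {a : ℕ → ℕ → ℂ} (hs : 1 < s.re) {C : ℝ} (ha : ∀ p k, ‖a p k‖ ≤ C)
    (ha0 : ∀ p, a p 0 = 0) :
    primePowerSeries s a = ∑' (p : Nat.Primes) (k : ℕ),
      a p (k + 1) / (((k : ℂ) + 2) * ((p : ℕ) : ℂ) ^ (s * ((k : ℂ) + 2))) := by
  refine tsum_congr fun p => ?_
  rw [((summable_term hs ha).prod_factor p).tsum_eq_zero_add]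
  simp only [ha0, zero_div, zero_add]
  refine tsum_congr fun k => ?_
  push_cast
  ring_nf

end primePowerSeries

open ArithmeticFunction in
lemma ArithmeticFunction.sum_divisors_moebius {R : Type*} [Ring R] (n : ℕ) :
    ∑ d ∈ n.divisors, (μ d : R) = if n = 1 then 1 else 0 := by
  have h := congrArg (· n) (coe_moebius_mul_coe_zeta (R := R))
  simp only [coe_mul_zeta_apply, intCoe_apply, one_apply] at h
  exact_mod_cast h

lemma DirichletCharacter.one_apply_eq_sum_moebius {R : Type*} [CommRing R] {q : ℕ} [NeZero q]
    (a : ZMod q) :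
    (1 : DirichletCharacter R q) a = ∑ d ∈ q.divisors with d ∣ a.val, (μ d : R) := by
  have hdiv : q.divisors.filter (· ∣ a.val) = (a.val.gcd q).divisors := by
    ext d
    simp [Nat.dvd_gcd_iff, NeZero.ne q, and_comm]
  rw [hdiv, ArithmeticFunction.sum_divisors_moebius]
  by_cases ha : IsUnit a
  · rw [MulChar.one_apply ha, if_pos]
    rwa [← ZMod.natCast_zmod_val a, ZMod.isUnit_iff_coprime] at ha
  · rw [MulChar.map_nonunit _ ha, if_neg]
    rwa [← ZMod.natCast_zmod_val a, ZMod.isUnit_iff_coprime] at ha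

namespace ZMod

variable {q : ℕ} [NeZero q]

lemma sum_stdAddChar_filter_dvd_val {d : ℕ} (hd : d ∣ q) :
    ∑ a : ZMod q with d ∣ a.val, stdAddChar a = if d = q then 1 else 0 := by
  split_ifs with hdq
  · subst hdq
    rw [Finset.sum_eq_single_of_mem 0 (by simp)]
    · exact AddChar.map_zero_eq_one _
    · intro a ha ha0
      have := Nat.eq_zero_of_dvd_of_lt (Finset.mem_filter.1 ha).2 (val_lt a)
      exact absurd ((val_eq_zero a).1 this) ha0
  · set S := ∑ a : ZMod q with d ∣ a.val, stdAddChar a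
    have hshift : S * stdAddChar (d : ZMod q) = S := by
      rw [Finset.sum_mul]
      refine Finset.sum_equiv (Equiv.addRight (d : ZMod q)) (fun a => ?_) fun a _ => ?_
      · simp only [Finset.mem_filter, Finset.mem_univ, true_and, Equiv.coe_addRight, val_add,
          val_natCast, Nat.dvd_mod_iff hd, Nat.dvd_add_left (Nat.dvd_mod_iff hd |>.2 dvd_rfl)]
      · simp [AddChar.map_add_eq_mul]
    have hne : stdAddChar (d : ZMod q) ≠ 1 := by
      rw [← AddChar.map_zero_eq_one (stdAddChar (N := q)), injective_stdAddChar.ne_iff, ne_eq,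
        natCast_eq_zero_iff]
      exact fun hqd => hdq (Nat.dvd_antisymm hd hqd)
    by_contra hS
    exact hne (mul_left_cancel₀ hS (hshift.trans (mul_one S).symm))

lemma gaussSum_one_stdAddChar :
    gaussSum (1 : DirichletCharacter ℂ q) stdAddChar = μ q := by
  calc gaussSum (1 : DirichletCharacter ℂ q) stdAddChar
      = ∑ a : ZMod q, ∑ d ∈ q.divisors, if d ∣ a.val then (μ d : ℂ) * stdAddChar a else 0 := by
        simp only [gaussSum, DirichletCharacter.one_apply_eq_sum_moebius, Finset.sum_filter,
          Finset.sum_mul, ite_mul, zero_mul]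
    _ = ∑ d ∈ q.divisors, (μ d : ℂ) * ∑ a : ZMod q with d ∣ a.val, stdAddChar a := by
        rw [Finset.sum_comm]
        simp only [Finset.mul_sum, Finset.sum_filter, mul_ite, mul_zero]
    _ = μ q := by
        rw [Finset.sum_congr rfl fun d hd =>
          by rw [sum_stdAddChar_filter_dvd_val (Nat.dvd_of_mem_divisors hd)]]
        simp [NeZero.ne q]

end ZMod

namespace DirichletCharacter

lemma starRingEnd_apply_eq_apply_inv {q : ℕ} (χ : DirichletCharacter ℂ q) {a : ZMod q}
    (ha : IsUnit a) : starRingEnd ℂ (χ a) = χ a⁻¹ := by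
  obtain ⟨u, rfl⟩ := ha
  rw [ZMod.inv_coe_unit, ← Ring.inverse_unit, ← MulChar.inv_apply, ← MulChar.star_apply']
  rfl

lemma sum_gaussSum_mul_starRingEnd {q : ℕ} [NeZero q] (ψ : AddChar (ZMod q) ℂ) {a : ZMod q}
    (ha : IsUnit a) :
    ∑ χ : DirichletCharacter ℂ q, gaussSum χ ψ * starRingEnd ℂ (χ a) = q.totient * ψ a := by
  calc ∑ χ : DirichletCharacter ℂ q, gaussSum χ ψ * starRingEnd ℂ (χ a)
      = ∑ b : ZMod q, ψ b * ∑ χ : DirichletCharacter ℂ q, χ a⁻¹ * χ b := by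
        simp only [gaussSum, Finset.sum_mul, Finset.mul_sum, starRingEnd_apply_eq_apply_inv _ ha]
        rw [Finset.sum_comm]
        exact Finset.sum_congr rfl fun b _ => Finset.sum_congr rfl fun χ _ => by ring
    _ = q.totient * ψ a := by
        simp_rw [sum_char_inv_mul_char_eq ℂ ha]
        simp [mul_comm]

end DirichletCharacter

lemma gaussS_eq_gaussSum {q : ℕ} [NeZero q] (χ : DirichletCharacter ℂ q) :
    gaussS χ = gaussSum χ ZMod.stdAddChar := by
  refine Finset.sum_nbij' (fun l => (l : ZMod q)) ZMod.val (fun _ _ => Finset.mem_univ _)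
    (fun a _ => Finset.mem_range.2 (ZMod.val_lt a)) (fun l hl => ZMod.val_cast_of_lt
    (Finset.mem_range.1 hl)) (fun a _ => ZMod.natCast_zmod_val a) fun l _ => ?_
  simp [ZMod.stdAddChar_apply, ZMod.toCircle_natCast]

lemma norm_exp_two_pi_I_mul_ofReal_div (x : ℝ) (q : ℕ) : ‖exp (2 * π * I * x / q)‖ = 1 := by
  simp [Complex.norm_exp]

lemma plogPsi_eq_plogPsiAlt_add_Thq (h : ℤ) (q : ℕ) {s : ℂ} (hs : 1 < s.re) :
    plogPsi h q s = plogPsiAlt h q s + Thq h q s := by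
  set a : ℕ → ℕ → ℂ := fun p k => exp (2 * π * I * p * h * (k + 1) / q)
  set b : ℕ → ℕ → ℂ := fun p k => exp (2 * π * I * h * (p : ℂ) ^ (k + 1) / q)
  have ha p k : ‖a p k‖ ≤ 1 := by
    simpa [a, mul_assoc] using (norm_exp_two_pi_I_mul_ofReal_div (p * h * (k + 1)) q).le
  have hb p k : ‖b p k‖ ≤ 1 := by
    simpa [b, mul_assoc] using (norm_exp_two_pi_I_mul_ofReal_div (h * p ^ (k + 1)) q).le
  have hThq : Thq h q s = primePowerSeries s (a - b) := by
    rw [primePowerSeries.eq_tsum_succ_of_zero (a := a - b) hs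
      (fun p k => norm_sub_le_of_le (ha p k) (hb p k))
      fun p => by simp only [Pi.sub_apply, a, b]; ring_nf]
    refine tsum_congr fun p => tsum_congr fun k => ?_
    simp only [Pi.sub_apply, a, b]
    push_cast
    ring_nf
  rw [hThq, primePowerSeries.sub hs ha hb]
  exact (add_sub_cancel (primePowerSeries s b) (primePowerSeries s a)).symm

lemma totient_mul_exp_eq_sum_gaussS {q : ℕ} [NeZero q] {m : ℤ} (hm : IsUnit (m : ZMod q)) :
    q.totient * exp (2 * π * I * m / q)
      = ∑ χ : DirichletCharacter ℂ q, gaussS χ * starRingEnd ℂ (χ m) := by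
  simp_rw [gaussS_eq_gaussSum, DirichletCharacter.sum_gaussSum_mul_starRingEnd _ hm,
    ZMod.stdAddChar_coe]

lemma exp_mul_prime_pow_eq_ite_add_sum {h : ℤ} {q : ℕ} [NeZero q] (hh : IsUnit (h : ZMod q))
    {p : ℕ} (hp : p.Prime) (k : ℕ) :
    exp (2 * π * I * h * (p : ℂ) ^ (k + 1) / q)
      = (if p ∣ q then exp (2 * π * I * h * (p : ℂ) ^ (k + 1) / q) else 0)
        + ∑ χ : DirichletCharacter ℂ q,
            1 / q.totient * (gaussS χ * starRingEnd ℂ (χ h)) * conjChar χ p ^ (k + 1) := by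
  by_cases hpq : p ∣ q
  · have hχ (χ : DirichletCharacter ℂ q) : conjChar χ p = 0 :=
      MulChar.map_nonunit _ fun hu => (ZMod.isUnit_prime_iff_not_dvd hp).1 hu hpq
    simp [hpq, hχ]
  · have hm : IsUnit ((h * p ^ (k + 1) : ℤ) : ZMod q) := by
      push_cast
      exact hh.mul ((ZMod.isUnit_prime_of_not_dvd hp hpq).pow _)
    have key : q.totient * exp (2 * π * I * h * (p : ℂ) ^ (k + 1) / q)
        = ∑ χ : DirichletCharacter ℂ q,
            gaussS χ * starRingEnd ℂ (χ h) * conjChar χ p ^ (k + 1) := by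
      simpa [conjChar, mul_assoc] using totient_mul_exp_eq_sum_gaussS hm
    have hφ : (q.totient : ℂ) ≠ 0 := Nat.cast_ne_zero.2 (Nat.totient_pos.2 (NeZero.pos q)).ne'
    rw [if_neg hpq, zero_add, ← mul_div_cancel_left₀ (exp _) hφ, key, Finset.sum_div]
    exact Finset.sum_congr rfl fun χ _ => by ring

lemma plogPsiAlt_eq_sum_primeFactors_add_sum_plogChar {h : ℤ} {q : ℕ} [NeZero q]
    (hh : IsUnit (h : ZMod q)) {s : ℂ} (hs : 1 < s.re) :
    plogPsiAlt h q s
      = ∑ p ∈ q.primeFactors, ∑' k : ℕ, exp (2 * π * I * h * (p : ℂ) ^ (k + 1) / q)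
          / (((k : ℂ) + 1) * (p : ℂ) ^ (s * ((k : ℂ) + 1)))
        + 1 / q.totient * ∑ χ : DirichletCharacter ℂ q,
            gaussS χ * starRingEnd ℂ (χ h) * plogChar (conjChar χ) s := by
  set b : ℕ → ℕ → ℂ := fun p k => exp (2 * π * I * h * (p : ℂ) ^ (k + 1) / q)
  set c : DirichletCharacter ℂ q → ℂ := fun χ => 1 / q.totient * (gaussS χ * starRingEnd ℂ (χ h))
  have hb p k : ‖if p ∣ q then b p k else 0‖ ≤ 1 := by
    split_ifs
    · simpa [b, mul_assoc] using (norm_exp_two_pi_I_mul_ofReal_div (h * p ^ (k + 1)) q).le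
    · simp
  have hc χ (p k : ℕ) : ‖c χ * conjChar χ p ^ (k + 1)‖ ≤ ‖c χ‖ := by
    rw [norm_mul, norm_pow]
    exact mul_le_of_le_one_right (norm_nonneg _)
      (pow_le_one₀ (norm_nonneg _) ((conjChar χ).norm_le_one _))
  have hsplit : plogPsiAlt h q s = primePowerSeries s
      ((fun p k => if p ∣ q then b p k else 0)
        + ∑ χ, fun (p k : ℕ) => c χ * conjChar χ p ^ (k + 1)) :=
    primePowerSeries.congr (a := b) fun p k => by
      simp only [Pi.add_apply, Finset.sum_apply]
      exact exp_mul_prime_pow_eq_ite_add_sum hh p.2 k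
  rw [hsplit, primePowerSeries.add hs hb fun p k => by
      rw [Finset.sum_apply, Finset.sum_apply]; exact norm_sum_le_of_le _ fun χ _ => hc χ p k,
    primePowerSeries.ite_dvd (NeZero.ne q), primePowerSeries.finsetSum hs _ hc, Finset.mul_sum]
  congr 1
  exact Finset.sum_congr rfl fun χ _ => by rw [primePowerSeries.const_mul, mul_assoc]; rfl

lemma plogChar_conjChar_one {q : ℕ} (hq : q ≠ 0) {s : ℂ} (hs : 1 < s.re) :
    plogChar (conjChar (1 : DirichletCharacter ℂ q)) s
      = plogZeta s - ∑ p ∈ q.primeFactors, ∑' k : ℕ,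
          1 / (((k : ℂ) + 1) * (p : ℂ) ^ (s * ((k : ℂ) + 1))) := by
  have hconj : conjChar (1 : DirichletCharacter ℂ q) = 1 := by
    ext
    simp [conjChar]
  have hsplit : plogChar (1 : DirichletCharacter ℂ q) s
      = primePowerSeries s ((fun _ _ => 1) - fun p _ => if p ∣ q then 1 else 0 : ℕ → ℕ → ℂ) :=
    primePowerSeries.congr (a := fun p k => (1 : DirichletCharacter ℂ q) p ^ (k + 1)) fun p k => by
      by_cases hpq : (p : ℕ) ∣ q
      · simp [hpq, MulChar.map_nonunit _ (mt (ZMod.isUnit_prime_iff_not_dvd p.2).1 (not_not.2 hpq))]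
      · simp [hpq, MulChar.one_apply (ZMod.isUnit_prime_of_not_dvd p.2 hpq)]
  have hite (p _k : ℕ) : ‖(if p ∣ q then 1 else 0 : ℂ)‖ ≤ 1 := by split_ifs <;> simp
  rw [hconj, hsplit, primePowerSeries.sub hs (fun _ _ => norm_one.le) hite,
    primePowerSeries.ite_dvd hq]
  rfl

theorem stmt9 (h : ℤ) (q : ℕ) (hq : 2 < q) (hcop : IsCoprime h (q : ℤ))
    (s : ℂ) (hs : 1 < s.re) :
    plogPsi h q s
      = (1 / (Nat.totient q : ℂ))
          * (∑ χ ∈ Finset.univ.filter fun χ : DirichletCharacter ℂ q => χ ≠ 1,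
              gaussS χ * (starRingEnd ℂ) (χ ((h : ZMod q))) * plogChar (conjChar χ) s)
        + ((ArithmeticFunction.moebius q : ℂ) / (Nat.totient q : ℂ)) * plogZeta s
        - ((ArithmeticFunction.moebius q : ℂ) / (Nat.totient q : ℂ))
            * ∑ p ∈ q.primeFactors, ∑' k : ℕ,
                1 / (((k : ℂ) + 1) * (p : ℂ) ^ (s * ((k : ℂ) + 1)))
        + (∑ p ∈ q.primeFactors, ∑' k : ℕ,
            Complex.exp (2 * (Real.pi : ℂ) * Complex.I * (h : ℂ) * ((p : ℂ) ^ (k + 1)) / (q : ℂ))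
              / (((k : ℂ) + 1) * (p : ℂ) ^ (s * ((k : ℂ) + 1))))
        + Thq h q s := by
  -- stated before `NeZero q` is in scope, so that `≠ 1` is decided as in the statement
  have hsplit (f : DirichletCharacter ℂ q → ℂ) :
      ∑ χ, f χ = f 1 + ∑ χ ∈ Finset.univ.filter fun χ : DirichletCharacter ℂ q => χ ≠ 1, f χ := by
    rw [← Finset.add_sum_erase _ _ (Finset.mem_univ 1)]
    congr 2
    ext
    simp
  have hq0 : q ≠ 0 := by omega
  have : NeZero q := ⟨hq0⟩
  have hh : IsUnit (h : ZMod q) := (ZMod.unitOfIsCoprime h hcop).isUnit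
  rw [plogPsi_eq_plogPsiAlt_add_Thq h q hs, plogPsiAlt_eq_sum_primeFactors_add_sum_plogChar hh hs,
    hsplit, plogChar_conjChar_one hq0 hs, gaussS_eq_gaussSum (1 : DirichletCharacter ℂ q),
    ZMod.gaussSum_one_stdAddChar, MulChar.one_apply hh, map_one]
  ring
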